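/- Fix an integer L ≥ 1 and let F(x) = 1 − e^{−Lx} Σ_{k=0}^{L−1} (Lx)^k / k! for x ≥ 0. Then the expected maximum of N i.i.d. random variables with distribution F, namely E_N = ∫_0^∞ (1 − F(x)^N) dx, satisfies lim_{N→∞} E_N / ( (log N + (L−1) log log N)/L ) = 1. -/

import Mathlib

/-!
Let `G = 1 - F` and `a_N = (log N + (L - 1) log log N) / L`. Cutting the integral at `c > 0`,
resp. `d ≥ 0`, and using that `G` is antitone with values in `[0, 1]`, gives
`c (1 - e^{-N G(c)}) ≤ E_N ≤ d + N ∫_d^∞ G`. For `x ≥ 1` the tail is comparable to the density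
`g = -G'`, namely `g / L ≤ G ≤ g`, hence also `∫_d^∞ G ≤ ∫_d^∞ g = G(d) ≤ g(d)`. At
`c = (1 - ε) a_N` and `d = (1 + ε) a_N` the choice of `a_N` makes `N g(c) ≳ N^ε` and
`N g(d) ≲ N^{-ε}`, so `E_N / a_N` eventually lies in `[(1 - ε)², 1 + 2ε]`.
-/

open Real Set Finset Filter MeasureTheory Topology
open scoped Nat

noncomputable section

/-- `E[max(X₁, …, X_N)]` for i.i.d. nonnegative `Xᵢ` with tail `P(Xᵢ > x) = G x`. -/
def expectedMax (G : ℝ → ℝ) (N : ℕ) : ℝ :=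
  ∫ x in Ioi 0, (1 - (1 - G x) ^ N)

section OneSubPow

variable {g : ℝ}

lemma one_sub_one_sub_pow_nonneg (hg : g ∈ Set.Icc 0 1) (N : ℕ) : 0 ≤ 1 - (1 - g) ^ N :=
  sub_nonneg.2 (pow_le_one₀ (by linarith [hg.2]) (by linarith [hg.1]))

lemma one_sub_one_sub_pow_le_one (hg : g ≤ 1) (N : ℕ) : 1 - (1 - g) ^ N ≤ 1 :=
  sub_le_self _ (pow_nonneg (by linarith) N)

lemma one_sub_one_sub_pow_le_mul (hg : g ≤ 1) (N : ℕ) : 1 - (1 - g) ^ N ≤ N * g := by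
  have := one_add_mul_le_pow (a := -g) (by linarith) N
  rw [← sub_eq_add_neg] at this
  linarith

lemma one_sub_pow_le_exp_neg_mul (hg : g ≤ 1) (N : ℕ) : (1 - g) ^ N ≤ exp (-(N * g)) :=
  calc (1 - g) ^ N ≤ exp (-g) ^ N := pow_le_pow_left₀ (by linarith) (one_sub_le_exp_neg g) N
    _ = exp (-(N * g)) := by rw [← exp_nat_mul, mul_neg]

end OneSubPow

section ExpectedMax

variable {G : ℝ → ℝ}

lemma integrableOn_one_sub_one_sub_pow (hG : MapsTo G (Ioi 0) (Icc 0 1))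
    (hGi : IntegrableOn G (Ioi 0)) (N : ℕ) :
    IntegrableOn (fun x => 1 - (1 - G x) ^ N) (Ioi 0) := by
  have hmeas := hGi.aestronglyMeasurable
  refine (hGi.const_mul N).mono' (by fun_prop) ?_
  filter_upwards [ae_restrict_mem measurableSet_Ioi] with x hx
  rw [Real.norm_of_nonneg (one_sub_one_sub_pow_nonneg (hG hx) N)]
  exact one_sub_one_sub_pow_le_mul (hG hx).2 N

lemma expectedMax_le_add (hG : MapsTo G (Ioi 0) (Icc 0 1)) (hGi : IntegrableOn G (Ioi 0))
    (N : ℕ) {d : ℝ} (hd : 0 ≤ d) :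
    expectedMax G N ≤ d + N * ∫ x in Ioi d, G x := by
  have hf := integrableOn_one_sub_one_sub_pow hG hGi N
  have hsub : Ioi d ⊆ Ioi 0 := Ioi_subset_Ioi hd
  rw [expectedMax, ← Ioc_union_Ioi_eq_Ioi hd, setIntegral_union (Ioc_disjoint_Ioi le_rfl)
    measurableSet_Ioi (hf.mono_set Ioc_subset_Ioi_self) (hf.mono_set hsub)]
  gcongr
  · calc ∫ x in Ioc 0 d, (1 - (1 - G x) ^ N) ≤ ∫ _ in Ioc 0 d, (1 : ℝ) :=
          setIntegral_mono_on (hf.mono_set Ioc_subset_Ioi_self)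
            (integrableOn_const measure_Ioc_lt_top.ne) measurableSet_Ioc
            fun x hx => one_sub_one_sub_pow_le_one (hG hx.1).2 N
      _ = d := by simp [hd]
  · rw [← integral_const_mul]
    exact setIntegral_mono_on (hf.mono_set hsub) ((hGi.mono_set hsub).const_mul _)
      measurableSet_Ioi fun x hx => one_sub_one_sub_pow_le_mul (hG (hsub hx)).2 N

lemma mul_le_expectedMax (hG : MapsTo G (Ioi 0) (Icc 0 1)) (hGa : AntitoneOn G (Ioi 0))
    (hGi : IntegrableOn G (Ioi 0)) (N : ℕ) {c : ℝ} (hc : 0 < c) :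
    c * (1 - (1 - G c) ^ N) ≤ expectedMax G N := by
  have hf := integrableOn_one_sub_one_sub_pow hG hGi N
  calc c * (1 - (1 - G c) ^ N) = ∫ _ in Ioc 0 c, (1 - (1 - G c) ^ N) := by simp [hc.le]
    _ ≤ ∫ x in Ioc 0 c, (1 - (1 - G x) ^ N) := by
        refine setIntegral_mono_on (integrableOn_const measure_Ioc_lt_top.ne)
          (hf.mono_set Ioc_subset_Ioi_self) measurableSet_Ioc fun x hx => ?_
        have := hGa hx.1 hc hx.2
        gcongr
        linarith [(hG hx.1).2]
    _ ≤ expectedMax G N :=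
        setIntegral_mono_set hf
          (ae_restrict_of_forall_mem measurableSet_Ioi fun x hx =>
            one_sub_one_sub_pow_nonneg (hG hx) N)
          Ioc_subset_Ioi_self.eventuallyLE

end ExpectedMax

section Limit

variable {G : ℝ → ℝ} {a : ℕ → ℝ}

lemma eventually_le_expectedMax (hG : MapsTo G (Ioi 0) (Icc 0 1)) (hGa : AntitoneOn G (Ioi 0))
    (hGi : IntegrableOn G (Ioi 0)) (ha : ∀ᶠ N in atTop, 0 < a N) {ε : ℝ} (hε0 : 0 < ε)
    (hε1 : ε < 1) (hlow : Tendsto (fun N : ℕ => N * G ((1 - ε) * a N)) atTop atTop) :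
    ∀ᶠ N in atTop, (1 - ε) ^ 2 * a N ≤ expectedMax G N := by
  have hsmall : ∀ᶠ N : ℕ in atTop, exp (-(N * G ((1 - ε) * a N))) ≤ ε :=
    (tendsto_exp_neg_atTop_nhds_zero.comp hlow).eventually (ge_mem_nhds hε0)
  filter_upwards [ha, hsmall] with N haN hN
  have hc : 0 < (1 - ε) * a N := mul_pos (by linarith) haN
  calc (1 - ε) ^ 2 * a N = (1 - ε) * a N * (1 - ε) := by ring
    _ ≤ (1 - ε) * a N * (1 - (1 - G ((1 - ε) * a N)) ^ N) := by
        gcongr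
        linarith [one_sub_pow_le_exp_neg_mul (hG hc).2 N]
    _ ≤ expectedMax G N := mul_le_expectedMax hG hGa hGi N hc

lemma eventually_expectedMax_le (hG : MapsTo G (Ioi 0) (Icc 0 1)) (hGi : IntegrableOn G (Ioi 0))
    (ha : ∀ᶠ N in atTop, 0 ≤ a N) {ε : ℝ} (hε : 0 < ε)
    (hup : Tendsto (fun N : ℕ => N * ∫ x in Ioi ((1 + ε) * a N), G x) atTop (𝓝 0)) :
    ∀ᶠ N in atTop, expectedMax G N ≤ (1 + ε) * a N + ε := by
  filter_upwards [ha, hup.eventually (ge_mem_nhds hε)] with N haN hN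
  exact (expectedMax_le_add hG hGi N (by positivity : 0 ≤ (1 + ε) * a N)).trans (by linarith)

theorem tendsto_expectedMax_div (hG : MapsTo G (Ioi 0) (Icc 0 1)) (hGa : AntitoneOn G (Ioi 0))
    (hGi : IntegrableOn G (Ioi 0)) (ha : Tendsto a atTop atTop)
    (hlow : ∀ ε, 0 < ε → ε < 1 → Tendsto (fun N : ℕ => N * G ((1 - ε) * a N)) atTop atTop)
    (hup : ∀ ε, 0 < ε →
      Tendsto (fun N : ℕ => N * ∫ x in Ioi ((1 + ε) * a N), G x) atTop (𝓝 0)) :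
    Tendsto (fun N => expectedMax G N / a N) atTop (𝓝 1) := by
  rw [Metric.tendsto_nhds]
  intro δ hδ
  set ε := min (δ / 3) (1 / 2)
  have hε0 : 0 < ε := by positivity
  have hεδ : ε ≤ δ / 3 := min_le_left _ _
  have hε1 : ε < 1 := (min_le_right _ _).trans_lt (by norm_num)
  have ha0 : ∀ᶠ N in atTop, 0 < a N := ha.eventually_gt_atTop 0
  filter_upwards [ha.eventually_ge_atTop 1,
    eventually_le_expectedMax hG hGa hGi ha0 hε0 hε1 (hlow ε hε0 hε1),
    eventually_expectedMax_le hG hGi (ha0.mono fun _ h => h.le) hε0 (hup ε hε0)]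
    with N haN hlo hhi
  have hpos : 0 < a N := by linarith
  have hlower : 1 - δ < expectedMax G N / a N := by
    rw [lt_div_iff₀ hpos]
    calc (1 - δ) * a N < (1 - ε) ^ 2 * a N := by gcongr; nlinarith
      _ ≤ expectedMax G N := hlo
  have hupper : expectedMax G N / a N < 1 + δ := by
    rw [div_lt_iff₀ hpos]; nlinarith
  rw [Real.dist_eq, abs_sub_lt_iff]
  constructor <;> linarith

end Limit

lemma hasDerivAt_sum_range_pow_div_factorial (n : ℕ) (y : ℝ) :
    HasDerivAt (fun y : ℝ => ∑ k ∈ range (n + 1), y ^ k / (k ! : ℝ))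
      (∑ k ∈ range n, y ^ k / (k ! : ℝ)) y := by
  induction n with
  | zero => simpa using hasDerivAt_const y (1 : ℝ)
  | succ n ih =>
    simp_rw [sum_range_succ _ (n + 1)]
    refine (ih.add ((hasDerivAt_pow (n + 1) y).div_const ((n + 1)! : ℝ))).congr_deriv ?_
    rw [sum_range_succ, Nat.factorial_succ]
    push_cast
    field_simp

lemma hasDerivAt_exp_neg_mul_sum_range (n : ℕ) (y : ℝ) :
    HasDerivAt (fun y => exp (-y) * ∑ k ∈ range (n + 1), y ^ k / (k ! : ℝ))
      (-(exp (-y) * y ^ n / n !)) y := by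
  refine ((hasDerivAt_neg y).exp.mul (hasDerivAt_sum_range_pow_div_factorial n y)).congr_deriv ?_
  rw [sum_range_succ]
  ring

lemma pow_eq_exp_natCast_mul_log {t : ℝ} (ht : 0 < t) (n : ℕ) : t ^ n = exp (n * log t) := by
  rw [exp_nat_mul, exp_log ht]

lemma pow_div_factorial_le_pow_div_factorial {k n : ℕ} (hkn : k ≤ n) {t : ℝ} (ht : n ≤ t) :
    t ^ k / k ! ≤ t ^ n / n ! := by
  induction n, hkn using Nat.le_induction with
  | base => rfl
  | succ n hkn ih =>
    push_cast at ht
    have ht0 : 0 ≤ t := by linarith [n.cast_nonneg (α := ℝ)]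
    calc t ^ k / k ! ≤ t ^ n / n ! := ih (by linarith)
      _ ≤ t ^ n / n ! * (t / (n + 1)) :=
          le_mul_of_one_le_right (by positivity) ((one_le_div (by positivity)).2 ht)
      _ = t ^ (n + 1) / (n + 1)! := by
          rw [pow_succ, Nat.factorial_succ]
          push_cast
          field_simp

/-- `1 - F`: the tail of the normalized `χ²` law with `2L` degrees of freedom, i.e. of the
Gamma law with shape `L` and rate `L`. -/
def erlangTail (L : ℕ) (x : ℝ) : ℝ :=
  exp (-(L : ℝ) * x) * ∑ k ∈ range L, ((L : ℝ) * x) ^ k / (k ! : ℝ)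

def erlangPDF (L : ℕ) (x : ℝ) : ℝ :=
  L * (exp (-(L : ℝ) * x) * ((L : ℝ) * x) ^ (L - 1) / ((L - 1)! : ℝ))

/-- The normalizer of the theorem is `erlangScale L (log N)`. -/
def erlangScale (L : ℕ) (t : ℝ) : ℝ :=
  (t + ((L : ℝ) - 1) * log t) / L

section Erlang

variable {L : ℕ}

lemma hasDerivAt_erlangTail (hL : 1 ≤ L) (x : ℝ) :
    HasDerivAt (erlangTail L) (-erlangPDF L x) x := by
  obtain ⟨n, rfl⟩ := Nat.exists_eq_add_of_le' hL
  convert! (hasDerivAt_exp_neg_mul_sum_range n ((n + 1 : ℕ) * x)).comp x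
    ((hasDerivAt_id x).const_mul ((n + 1 : ℕ) : ℝ)) using 1
  · ext y
    simp only [erlangTail, Function.comp_apply, neg_mul]
  · rw [erlangPDF, Nat.add_sub_cancel, neg_mul]
    ring

lemma erlangTail_nonneg (L : ℕ) {x : ℝ} (hx : 0 ≤ x) : 0 ≤ erlangTail L x := by
  unfold erlangTail
  positivity

lemma erlangTail_le_one (L : ℕ) {x : ℝ} (hx : 0 ≤ x) : erlangTail L x ≤ 1 :=
  calc erlangTail L x ≤ exp (-(L : ℝ) * x) * exp (L * x) := by
        unfold erlangTail
        gcongr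
        exact sum_le_exp_of_nonneg (by positivity) L
    _ = 1 := by rw [← exp_add]; simp

lemma mapsTo_erlangTail (L : ℕ) : MapsTo (erlangTail L) (Ioi 0) (Icc 0 1) :=
  fun _ hx => ⟨erlangTail_nonneg L (le_of_lt hx), erlangTail_le_one L (le_of_lt hx)⟩

lemma erlangPDF_nonneg (L : ℕ) {x : ℝ} (hx : 0 ≤ x) : 0 ≤ erlangPDF L x := by
  unfold erlangPDF
  positivity

lemma erlangPDF_le_mul_erlangTail (hL : 1 ≤ L) {x : ℝ} (hx : 0 ≤ x) :
    erlangPDF L x ≤ L * erlangTail L x := by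
  unfold erlangPDF erlangTail
  rw [mul_div_assoc]
  gcongr
  exact single_le_sum (f := fun k => ((L : ℝ) * x) ^ k / (k ! : ℝ)) (fun k _ => by positivity)
    (mem_range.2 (by omega))

lemma erlangTail_le_erlangPDF (hL : 1 ≤ L) {x : ℝ} (hx : 1 ≤ x) :
    erlangTail L x ≤ erlangPDF L x := by
  have hLx : ((L - 1 : ℕ) : ℝ) ≤ L * x := by
    rw [Nat.cast_pred hL]
    nlinarith [(Nat.one_le_cast (α := ℝ)).2 hL]
  calc erlangTail L x
      ≤ exp (-(L : ℝ) * x) * ∑ _k ∈ range L, ((L : ℝ) * x) ^ (L - 1) / (L - 1)! := by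
        unfold erlangTail
        refine mul_le_mul_of_nonneg_left (sum_le_sum fun k hk => ?_) (exp_nonneg _)
        exact pow_div_factorial_le_pow_div_factorial
          (Nat.le_sub_one_of_lt (Finset.mem_range.1 hk)) hLx
    _ = erlangPDF L x := by
        rw [sum_const, card_range, nsmul_eq_mul, erlangPDF]
        ring

lemma erlangTail_antitoneOn (hL : 1 ≤ L) : AntitoneOn (erlangTail L) (Ioi 0) :=
  antitoneOn_of_hasDerivWithinAt_nonpos (convex_Ioi 0)
    (fun x _ => (hasDerivAt_erlangTail hL x).continuousAt.continuousWithinAt)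
    (fun x _ => (hasDerivAt_erlangTail hL x).hasDerivWithinAt)
    (fun x hx => neg_nonpos.2 (erlangPDF_nonneg L (le_of_lt (by simpa using hx))))

lemma integrableOn_erlangTail (L : ℕ) : IntegrableOn (erlangTail L) (Ioi 0) := by
  have hterm : ∀ k ∈ range L, IntegrableOn (fun x : ℝ => x ^ k * exp (-L * x)) (Ioi 0) :=
    fun k hk => by
      simpa using integrableOn_rpow_mul_exp_neg_mul_rpow (p := 1) (s := k) (b := L)
        (by linarith [k.cast_nonneg (α := ℝ)]) one_pos
        (Nat.cast_pos.2 (Nat.zero_lt_of_lt (Finset.mem_range.1 hk)))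
  refine IntegrableOn.congr_fun
    (integrable_finsetSum (range L) fun k hk => (hterm k hk).const_mul ((L : ℝ) ^ k / k !))
    (fun x _ => ?_) measurableSet_Ioi
  simp only [erlangTail, mul_sum]
  refine sum_congr rfl fun k _ => ?_
  ring

lemma tendsto_erlangPDF_atTop (hL : 1 ≤ L) : Tendsto (erlangPDF L) atTop (𝓝 0) := by
  have h := ((tendsto_pow_mul_exp_neg_atTop_nhds_zero (L - 1)).comp
    (tendsto_id.const_mul_atTop (Nat.cast_pos.2 hL))).const_mul ((L : ℝ) / (L - 1)!)
  rw [mul_zero] at h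
  refine h.congr fun x => ?_
  simp only [Function.comp_apply, id, erlangPDF, neg_mul]
  ring

lemma tendsto_erlangTail_atTop (hL : 1 ≤ L) : Tendsto (erlangTail L) atTop (𝓝 0) :=
  tendsto_of_tendsto_of_tendsto_of_le_of_le' tendsto_const_nhds (tendsto_erlangPDF_atTop hL)
    ((eventually_ge_atTop 0).mono fun _ hx => erlangTail_nonneg L hx)
    ((eventually_ge_atTop 1).mono fun _ hx => erlangTail_le_erlangPDF hL hx)

lemma integral_Ioi_erlangTail_le (hL : 1 ≤ L) {d : ℝ} (hd : 1 ≤ d) :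
    ∫ x in Ioi d, erlangTail L x ≤ erlangPDF L d := by
  have hderiv : ∀ x ∈ Ici d, HasDerivAt (fun x => -erlangTail L x) (erlangPDF L x) x :=
    fun x _ => by simpa using (hasDerivAt_erlangTail hL x).fun_neg
  have hpos : ∀ x ∈ Ioi d, 0 ≤ erlangPDF L x :=
    fun x hx => erlangPDF_nonneg L (zero_le_one.trans (hd.trans (le_of_lt hx)))
  have hlim : Tendsto (fun x => -erlangTail L x) atTop (𝓝 0) := by
    simpa using (tendsto_erlangTail_atTop hL).neg
  calc ∫ x in Ioi d, erlangTail L x ≤ ∫ x in Ioi d, erlangPDF L x :=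
        setIntegral_mono_on ((integrableOn_erlangTail L).mono_set (Ioi_subset_Ioi (by linarith)))
          (integrableOn_Ioi_deriv_of_nonneg' hderiv hpos hlim) measurableSet_Ioi
          fun x hx => erlangTail_le_erlangPDF hL (hd.trans (le_of_lt hx))
    _ = erlangTail L d := by rw [integral_Ioi_of_hasDerivAt_of_nonneg' hderiv hpos hlim]; ring
    _ ≤ erlangPDF L d := erlangTail_le_erlangPDF hL hd

lemma tendsto_erlangScale_atTop (hL : 1 ≤ L) : Tendsto (erlangScale L) atTop atTop := by
  have hL' : (1 : ℝ) ≤ L := Nat.one_le_cast.2 hL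
  refine tendsto_atTop_mono' _ ?_ (tendsto_id.atTop_div_const (by linarith : (0 : ℝ) < L))
  filter_upwards [eventually_ge_atTop 1] with t ht
  show t / L ≤ erlangScale L t
  exact div_le_div_of_nonneg_right (by nlinarith [log_nonneg ht]) (by linarith)

lemma exp_mul_erlangPDF_mul_erlangScale (hL : 1 ≤ L) (θ t : ℝ) :
    exp t * erlangPDF L (θ * erlangScale L t) = L / (L - 1)! *
      (exp (t - θ * (t + (L - 1) * log t)) * (θ * (t + (L - 1) * log t)) ^ (L - 1)) := by
  have hL0 : (L : ℝ) ≠ 0 := Nat.cast_ne_zero.2 (by omega)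
  have hx : (L : ℝ) * (θ * erlangScale L t) = θ * (t + (L - 1) * log t) := by
    rw [erlangScale]
    field_simp
  rw [erlangPDF, neg_mul, hx, sub_eq_add_neg t, exp_add]
  ring

lemma le_exp_mul_erlangPDF (hL : 1 ≤ L) {ε t : ℝ} (hε0 : 0 ≤ ε) (hε1 : ε ≤ 1) (ht : 1 ≤ t) :
    L / (L - 1)! * (1 - ε) ^ (L - 1) * exp (ε * t) ≤
      exp t * erlangPDF L ((1 - ε) * erlangScale L t) := by
  have hu : 0 ≤ log t := log_nonneg ht
  have hL' : (1 : ℝ) ≤ L := Nat.one_le_cast.2 hL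
  rw [exp_mul_erlangPDF_mul_erlangScale hL]
  calc L / (L - 1)! * (1 - ε) ^ (L - 1) * exp (ε * t)
      = L / (L - 1)! * (exp (ε * t - (L - 1) * log t) * ((1 - ε) * t) ^ (L - 1)) := by
        rw [mul_pow, pow_eq_exp_natCast_mul_log (zero_lt_one.trans_le ht), Nat.cast_pred hL,
          exp_sub]
        field_simp
    _ ≤ _ := by
        gcongr _ * (exp ?_ * ?_ ^ _)
        · nlinarith [mul_nonneg (mul_nonneg hε0 (sub_nonneg.2 hL')) hu]
        · nlinarith [mul_nonneg (sub_nonneg.2 hε1) (mul_nonneg (sub_nonneg.2 hL') hu)]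

lemma exp_mul_erlangPDF_le (hL : 1 ≤ L) {ε t : ℝ} (hε : 0 ≤ ε) (ht : 1 ≤ t) :
    exp t * erlangPDF L ((1 + ε) * erlangScale L t) ≤
      L / (L - 1)! * ((1 + ε) * L) ^ (L - 1) * exp (-(ε * t)) := by
  have hu : 0 ≤ log t := log_nonneg ht
  have hut : log t ≤ t := log_le_self (by linarith)
  have hL' : (1 : ℝ) ≤ L := Nat.one_le_cast.2 hL
  rw [exp_mul_erlangPDF_mul_erlangScale hL]
  calc _ ≤ L / (L - 1)! * (exp (-(ε * t) - (L - 1) * log t) * ((1 + ε) * L * t) ^ (L - 1)) := by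
        gcongr _ * (exp ?_ * ?_ ^ _)
        · nlinarith [mul_nonneg (mul_nonneg hε (sub_nonneg.2 hL')) hu]
        · nlinarith [mul_nonneg (by linarith : (0 : ℝ) ≤ 1 + ε)
            (mul_nonneg (sub_nonneg.2 hL') (sub_nonneg.2 hut))]
    _ = L / (L - 1)! * ((1 + ε) * L) ^ (L - 1) * exp (-(ε * t)) := by
        rw [mul_pow, pow_eq_exp_natCast_mul_log (zero_lt_one.trans_le ht), Nat.cast_pred hL,
          exp_sub]
        field_simp

lemma tendsto_exp_mul_erlangTail (hL : 1 ≤ L) {ε : ℝ} (hε0 : 0 < ε) (hε1 : ε < 1) :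
    Tendsto (fun t => exp t * erlangTail L ((1 - ε) * erlangScale L t)) atTop atTop := by
  have hL0 : (0 : ℝ) < L := Nat.cast_pos.2 hL
  have hK : 0 < (1 - ε) ^ (L - 1) / (L - 1)! := by
    have : 0 < 1 - ε := by linarith
    positivity
  refine tendsto_atTop_mono' _ ?_
    ((tendsto_exp_atTop.comp (tendsto_id.const_mul_atTop hε0)).const_mul_atTop hK)
  filter_upwards [eventually_ge_atTop 1, (tendsto_erlangScale_atTop hL).eventually_ge_atTop 0]
    with t ht hat
  have hx : 0 ≤ (1 - ε) * erlangScale L t := mul_nonneg (by linarith) hat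
  calc (1 - ε) ^ (L - 1) / (L - 1)! * exp (ε * t)
      = L / (L - 1)! * (1 - ε) ^ (L - 1) * exp (ε * t) / L := by field_simp
    _ ≤ exp t * erlangPDF L ((1 - ε) * erlangScale L t) / L := by
        gcongr ?_ / _
        exact le_exp_mul_erlangPDF hL hε0.le hε1.le ht
    _ ≤ exp t * erlangTail L ((1 - ε) * erlangScale L t) := by
        rw [div_le_iff₀ hL0, mul_assoc]
        gcongr
        linarith [erlangPDF_le_mul_erlangTail hL hx]

lemma tendsto_exp_mul_integral_erlangTail (hL : 1 ≤ L) {ε : ℝ} (hε : 0 < ε) :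
    Tendsto (fun t => exp t * ∫ x in Ioi ((1 + ε) * erlangScale L t), erlangTail L x)
      atTop (𝓝 0) := by
  have hlim : Tendsto (fun t => L / (L - 1)! * ((1 + ε) * L) ^ (L - 1) * exp (-(ε * t)))
      atTop (𝓝 0) := by
    simpa using (tendsto_exp_neg_atTop_nhds_zero.comp (tendsto_id.const_mul_atTop hε)).const_mul
      ((L : ℝ) / (L - 1)! * ((1 + ε) * L) ^ (L - 1))
  have hd : ∀ᶠ t in atTop, 1 ≤ (1 + ε) * erlangScale L t :=
    (tendsto_erlangScale_atTop hL).eventually_ge_atTop 1 |>.mono fun t ht => by nlinarith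
  refine tendsto_of_tendsto_of_tendsto_of_le_of_le' tendsto_const_nhds hlim ?_ ?_
  · filter_upwards [hd] with t hdt
    exact mul_nonneg (exp_nonneg t) (setIntegral_nonneg measurableSet_Ioi
      fun x hx => erlangTail_nonneg L (zero_le_one.trans (hdt.trans (le_of_lt hx))))
  · filter_upwards [eventually_ge_atTop 1, hd] with t ht hdt
    calc exp t * ∫ x in Ioi ((1 + ε) * erlangScale L t), erlangTail L x
        ≤ exp t * erlangPDF L ((1 + ε) * erlangScale L t) := by
          gcongr
          exact integral_Ioi_erlangTail_le hL hdt
      _ ≤ _ := exp_mul_erlangPDF_le hL hε.le ht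

end Erlang

lemma tendsto_natCast_mul_comp_log {f : ℝ → ℝ} {l : Filter ℝ}
    (h : Tendsto (fun t => exp t * f t) atTop l) :
    Tendsto (fun N : ℕ => (N : ℝ) * f (log N)) atTop l := by
  refine (h.comp (tendsto_log_atTop.comp tendsto_natCast_atTop_atTop)).congr' ?_
  filter_upwards [eventually_gt_atTop 0] with N hN
  simp [exp_log (Nat.cast_pos.2 hN)]

end

/-- Fix `L ≥ 1`, `F(x) = 1 − e^{−Lx} Σ_{k<L} (Lx)^k/k!`. The expected maximum of `N`
i.i.d. variables with cdf `F`, `E_N = ∫_0^∞ (1 − F(x)^N) dx`, satisfies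
`lim_{N→∞} E_N / ((log N + (L−1) log log N)/L) = 1`. -/
theorem chi_square_max_expectation_limit (L : ℕ) (hL : 1 ≤ L) :
    Tendsto (fun N : ℕ =>
        (∫ x in Ioi (0 : ℝ),
          (1 - (1 - Real.exp (-(L : ℝ) * x) *
            ∑ k ∈ Finset.range L, ((L : ℝ) * x) ^ k / (Nat.factorial k : ℝ)) ^ N)) /
        ((Real.log N + ((L : ℝ) - 1) * Real.log (Real.log N)) / L))
      atTop (nhds 1) :=
  tendsto_expectedMax_div (mapsTo_erlangTail L) (erlangTail_antitoneOn hL)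
    (integrableOn_erlangTail L)
    ((tendsto_erlangScale_atTop hL).comp (tendsto_log_atTop.comp tendsto_natCast_atTop_atTop))
    (fun _ hε0 hε1 => tendsto_natCast_mul_comp_log (tendsto_exp_mul_erlangTail hL hε0 hε1))
    (fun _ hε => tendsto_natCast_mul_comp_log (tendsto_exp_mul_integral_erlangTail hL hε))
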